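/- arXiv:1406.3850 — 3 statements merged into one kernel-verified Lean document; each statement's English description precedes it below -/
import Mathlib

section
/- Let N ≥ 2. There is a constant C(N) > 0 such that for all 0 < σ ≤ ρ and every set E ⊂ ℝ^{N+1}: PH_ρ^N(E) ≤ PH_σ^N(E) ≤ C(N) (ρ/σ)² PH_ρ^N(E). -/
open MeasureTheory Metric Set
open scoped ENNReal NNReal

noncomputable section

/-- Points of `ℝ^{N+1}` are written `(x, t)` with `x ∈ ℝ^N` and `t ∈ ℝ`. -/
abbrev PSpace (N : ℕ) := EuclideanSpace ℝ (Fin N) × ℝ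

/-- The parabolic cylinder `Q_δ(x,t) = B_δ(x) × (t - δ², t]`. -/
def pQ (N : ℕ) (δ : ℝ) (z : PSpace N) : Set (PSpace N) :=
  ball z.1 δ ×ˢ Ioc (z.2 - δ ^ 2) z.2

/-- The parabolic cylinder `Q̃_r(x,t) = B_r(x) × (t - r², t + r²)`. -/
def pQt (N : ℕ) (r : ℝ) (z : PSpace N) : Set (PSpace N) :=
  ball z.1 r ×ˢ Ioo (z.2 - r ^ 2) (z.2 + r ^ 2)

/-- The parabolic boundary of an open set `O ⊆ ℝ^{N+1}`: points of the topological
boundary such that every downward cylinder `Q_δ` meets the complement of `O`. -/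
def pBoundary (N : ℕ) (O : Set (PSpace N)) : Set (PSpace N) :=
  {z ∈ frontier O | ∀ δ > 0, (pQ N δ z ∩ Oᶜ).Nonempty}

/-- Partial derivative in time. -/
def tDeriv {N : ℕ} (u : PSpace N → ℝ) (z : PSpace N) : ℝ :=
  deriv (fun s => u (z.1, s)) z.2

/-- Partial derivative in the `i`-th spatial direction. -/
def xDeriv {N : ℕ} (i : Fin N) (u : PSpace N → ℝ) (z : PSpace N) : ℝ :=
  lineDeriv ℝ (fun y => u (y, z.2)) z.1 (EuclideanSpace.single i 1)

/-- Second spatial partial derivative. -/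
def xxDeriv {N : ℕ} (i j : Fin N) (u : PSpace N → ℝ) (z : PSpace N) : ℝ :=
  xDeriv i (xDeriv j u) z

/-- Spatial Laplacian. -/
def lapl {N : ℕ} (u : PSpace N → ℝ) (z : PSpace N) : ℝ :=
  ∑ i : Fin N, xxDeriv i i u z

/-- Euclidean norm of the spatial gradient. -/
def gradNorm {N : ℕ} (u : PSpace N → ℝ) (z : PSpace N) : ℝ :=
  Real.sqrt (∑ i : Fin N, (xDeriv i u z) ^ 2)

/-- `u ∈ C^{2,1}(O)` : `u`, its first and second spatial derivatives and its time
derivative exist and are continuous in `O`. -/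
structure IsC21 {N : ℕ} (O : Set (PSpace N)) (u : PSpace N → ℝ) : Prop where
  cont : ContinuousOn u O
  diff_t : ∀ z ∈ O, DifferentiableAt ℝ (fun s => u (z.1, s)) z.2
  cont_t : ContinuousOn (tDeriv u) O
  diff_x : ∀ (i : Fin N), ∀ z ∈ O,
    LineDifferentiableAt ℝ (fun y => u (y, z.2)) z.1 (EuclideanSpace.single i 1)
  cont_x : ∀ i : Fin N, ContinuousOn (xDeriv i u) O
  diff_xx : ∀ (i j : Fin N), ∀ z ∈ O,
    LineDifferentiableAt ℝ (fun y => xDeriv j u (y, z.2)) z.1 (EuclideanSpace.single i 1)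
  cont_xx : ∀ i j : Fin N, ContinuousOn (xxDeriv i j u) O

/-- The blow-up condition `lim_{δ→0} inf_{O ∩ Q_δ(z)} u = ∞` at every point of the
parabolic boundary. -/
def BlowsUp {N : ℕ} (O : Set (PSpace N)) (u : PSpace N → ℝ) : Prop :=
  ∀ z ∈ pBoundary N O, ∀ M : ℝ, ∃ δ > (0 : ℝ), ∀ w ∈ O ∩ pQ N δ z, M ≤ u w

/-- A large solution of `∂_t u - Δu + f(u) = 0` in `O`. -/
def IsLargeSolution {N : ℕ} (O : Set (PSpace N)) (f : ℝ → ℝ) (u : PSpace N → ℝ) : Prop :=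
  IsC21 O u ∧ (∀ z ∈ O, tDeriv u z - lapl u z + f (u z) = 0) ∧ BlowsUp O u

/-- The parabolic Sobolev norm `‖φ‖_{W^{2,1}_p(ℝ^{N+1})}`. -/
def W21Norm (N : ℕ) (p : ℝ) (φ : PSpace N → ℝ) : ℝ :=
  (eLpNorm φ (ENNReal.ofReal p) volume).toReal
    + (eLpNorm (tDeriv φ) (ENNReal.ofReal p) volume).toReal
    + (eLpNorm (gradNorm φ) (ENNReal.ofReal p) volume).toReal
    + ∑ i : Fin N, ∑ j : Fin N, (eLpNorm (xxDeriv i j φ) (ENNReal.ofReal p) volume).toReal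

/-- The capacity `Cap_{2,1,p}` of a compact set `K ⊆ ℝ^{N+1}`. -/
def cap21c (N : ℕ) (p : ℝ) (K : Set (PSpace N)) : ℝ :=
  sInf { c | ∃ φ : SchwartzMap (PSpace N) ℝ,
    (∃ U, IsOpen U ∧ K ⊆ U ∧ ∀ z ∈ U, 1 ≤ φ z) ∧ c = W21Norm N p (fun z => φ z) ^ p }

/-- The capacity `Cap_{2,1,p}` of an arbitrary (Suslin) set. -/
def cap21 (N : ℕ) (p : ℝ) (E : Set (PSpace N)) : ℝ :=
  sSup { c | ∃ D, D ⊆ E ∧ IsCompact D ∧ c = cap21c N p D }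

/-- The parabolic Hausdorff capacity `PH_ρ^N(E)`. -/
def PHcap (N : ℕ) (ρ : ℝ) (E : Set (PSpace N)) : ℝ≥0∞ :=
  ⨅ (c : ℕ → PSpace N × ℝ)
    (_ : (∀ j, 0 ≤ (c j).2 ∧ (c j).2 ≤ ρ) ∧ E ⊆ ⋃ j, pQt N (c j).2 (c j).1),
    ∑' j, ENNReal.ofReal ((c j).2 ^ N)

/-- The truncated Riesz parabolic potential `I_2^R[μ]`. -/
def riesz (N : ℕ) (R : ℝ) (μ : Measure (PSpace N)) (z : PSpace N) : ℝ≥0∞ :=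
  ∫⁻ ρ in Ioo (0 : ℝ) R, μ (pQt N ρ z) / ENNReal.ofReal (ρ ^ (N + 1))

/-- The truncated fractional maximal parabolic potential `M_2^R[μ]`. -/
def maxPot (N : ℕ) (R : ℝ) (μ : Measure (PSpace N)) (z : PSpace N) : ℝ≥0∞ :=
  ⨆ (ρ : ℝ) (_ : ρ ∈ Ioo (0 : ℝ) R), μ (pQt N ρ z) / ENNReal.ofReal (ρ ^ N)

/-- The Gaussian heat kernel on `ℝ^{N+1}`. -/
def heatK (N : ℕ) (z : PSpace N) : ℝ :=
  if 0 < z.2 then (4 * Real.pi * z.2) ^ (-(N : ℝ) / 2) * Real.exp (-‖z.1‖ ^ 2 / (4 * z.2))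
  else 0

/-- The heat potential `(ℍ * μ)(x,t)` of a nonnegative measure. -/
def heatPot (N : ℕ) (μ : Measure (PSpace N)) (z : PSpace N) : ℝ≥0∞ :=
  ∫⁻ w, ENNReal.ofReal (heatK N (z.1 - w.1, z.2 - w.2)) ∂μ

/-- Exponential on `ℝ≥0∞`. -/
def expE (x : ℝ≥0∞) : ℝ≥0∞ := if x = ⊤ then ⊤ else ENNReal.ofReal (Real.exp x.toReal)

/-- Parabolic distance from a point to a set (taken over points at earlier times). -/
def pDist (N : ℕ) (z : PSpace N) (S : Set (PSpace N)) : ℝ :=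
  sInf { r | ∃ w ∈ S, w.2 ≤ z.2 ∧ r = max (dist z.1 w.1) (Real.sqrt (z.2 - w.2)) }

end

/-!
Monotonicity in the radius is immediate, since a cover by cylinders of radius at most `σ` is one
by cylinders of radius at most `ρ`. For the doubling bound, `PH_σ^N` is countably subadditive, so
it suffices to cover a single cylinder `Q̃_r(z)` with `σ ≤ r ≤ ρ` by cylinders of radius `σ`.
A packing (volume) argument covers `B_r(x)` by at most `(5r/σ)^N` balls of radius `σ`, and the
time interval `(t - r², t + r²)` by at most `5r²/σ²` intervals of half-length `σ²`; the products
of these are cylinders `Q̃_σ`, of total cost at most `5^{N+1} (r/σ)² r^N ≤ 5^{N+1} (ρ/σ)² r^N`.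
-/

section BallCover

open Function

variable {E : Type*} [NormedAddCommGroup E] [NormedSpace ℝ E] [FiniteDimensional ℝ E]

theorem Metric.IsSeparated.encard_le_of_subset_ball {C : Set E} {x : E} {R : ℝ} {δ : ℝ≥0}
    (hδ : 0 < δ) (hC : IsSeparated (2 * δ : ℝ≥0) C) (hCx : C ⊆ ball x R) :
    C.encard ≤ ⌊((R + δ) / δ) ^ Module.finrank ℝ E⌋₊ := by
  rcases C.eq_empty_or_nonempty with rfl | ⟨c, hc⟩
  · simp
  have hR : 0 < R := pos_of_mem_ball (hCx hc)
  borelize E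
  set μ : Measure E := Measure.addHaar
  have hδ' : (0 : ℝ) < δ := hδ
  have hdisj : Pairwise (Disjoint on fun c : C => ball (c : E) δ) := by
    intro a b hab
    refine ball_disjoint_ball ?_
    have h : ((2 * δ : ℝ≥0) : ℝ≥0∞) < edist (a : E) b := hC a.2 b.2 (Subtype.coe_injective.ne hab)
    rw [edist_nndist, ENNReal.coe_lt_coe] at h
    have h' : 2 * (δ : ℝ) < dist (a : E) b := by exact_mod_cast h
    linarith
  have hsub : (⋃ c : C, ball (c : E) δ) ⊆ ball x (R + δ) := by
    refine iUnion_subset fun c => ball_subset_ball' ?_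
    have := mem_ball.1 (hCx c.2)
    linarith
  have key : (C.encard : ℝ≥0∞) * ENNReal.ofReal ((δ : ℝ) ^ Module.finrank ℝ E) * μ (ball 0 1)
      ≤ ENNReal.ofReal ((R + δ) ^ Module.finrank ℝ E) * μ (ball 0 1) := by
    calc (C.encard : ℝ≥0∞) * ENNReal.ofReal ((δ : ℝ) ^ Module.finrank ℝ E) * μ (ball 0 1)
        = ∑' c : C, μ (ball (c : E) δ) := by
          simp_rw [Measure.addHaar_ball_of_pos μ _ hδ', ENNReal.tsum_const, mul_assoc]; rfl
      _ ≤ μ (⋃ c : C, ball (c : E) δ) :=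
          tsum_meas_le_meas_iUnion_of_disjoint μ (fun _ => measurableSet_ball) hdisj
      _ ≤ μ (ball x (R + δ)) := measure_mono hsub
      _ = _ := Measure.addHaar_ball_of_pos μ _ (by positivity)
  rw [ENNReal.mul_le_mul_iff_left (measure_ball_pos μ 0 one_pos).ne' measure_ball_lt_top.ne,
    ← ENNReal.le_div_iff_mul_le (.inl (by positivity)) (.inl ENNReal.ofReal_ne_top)] at key
  rw [← ENNReal.ofReal_div_of_pos (by positivity), ← div_pow] at key
  have hne : C.encard ≠ ⊤ := fun h => by simp [h] at key
  obtain ⟨n, hn⟩ := ENat.ne_top_iff_exists.1 hne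
  rw [← hn] at key ⊢
  exact_mod_cast Nat.le_floor <| by
    simpa using (ENNReal.le_ofReal_iff_toReal_le (by simp) (by positivity)).1 key

theorem exists_finset_ball_cover (x : E) {ε R : ℝ} (hε : 0 < ε) (hεR : ε ≤ R) :
    ∃ S : Finset E, (S.card : ℝ) ≤ (5 * R / ε) ^ Module.finrank ℝ E ∧
      ball x R ⊆ ⋃ y ∈ S, ball y ε := by
  set δ : ℝ≥0 := ⟨ε / 4, by positivity⟩
  have hδ : (δ : ℝ) = ε / 4 := rfl
  have hδpos : 0 < δ := by rw [← NNReal.coe_pos, hδ]; positivity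
  have hratio₀ : 0 ≤ (R + δ) / δ := by rw [hδ]; have := hε.le.trans hεR; positivity
  have hratio : (R + δ) / δ ≤ 5 * R / ε := by
    rw [hδ, div_le_div_iff₀ (by positivity) hε]; nlinarith
  have hpack : packingNumber (2 * δ) (ball x R) ≤ ⌊((R + δ) / δ) ^ Module.finrank ℝ E⌋₊ :=
    iSup_le fun C => iSup_le fun hCA => iSup_le fun hC =>
      hC.encard_le_of_subset_ball hδpos hCA
  have hcov := (coveringNumber_le_packingNumber _ _).trans hpack
  have hfin : coveringNumber (2 * δ) (ball x R) ≠ ⊤ := ne_top_of_le_ne_top (by simp) hcov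
  have hM : (minimalCover (2 * δ) (ball x R)).Finite := finite_minimalCover
  refine ⟨hM.toFinset, ?_, fun a ha => ?_⟩
  · rw [← encard_minimalCover hfin, hM.encard_eq_coe_toFinset_card, Nat.cast_le] at hcov
    calc (hM.toFinset.card : ℝ) ≤ ⌊((R + δ) / δ) ^ Module.finrank ℝ E⌋₊ := by exact_mod_cast hcov
      _ ≤ ((R + δ) / δ) ^ Module.finrank ℝ E := Nat.floor_le (pow_nonneg hratio₀ _)
      _ ≤ (5 * R / ε) ^ Module.finrank ℝ E := pow_le_pow_left₀ hratio₀ hratio _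
  · obtain ⟨y, hy, hay⟩ := isCover_minimalCover hfin ha
    have hay' : edist a y ≤ (2 * δ : ℝ≥0) := hay
    rw [edist_nndist, ENNReal.coe_le_coe, ← NNReal.coe_le_coe, coe_nndist] at hay'
    refine mem_biUnion (hM.mem_toFinset.2 hy) (mem_ball.2 ?_)
    push_cast at hay'
    linarith

end BallCover

section ParabolicCover

variable {N : ℕ}

def IsParabolicCover {ι : Type*} (N : ℕ) (ρ : ℝ) (E : Set (PSpace N))
    (c : ι → PSpace N × ℝ) : Prop :=
  (∀ j, 0 ≤ (c j).2 ∧ (c j).2 ≤ ρ) ∧ E ⊆ ⋃ j, pQt N (c j).2 (c j).1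

theorem pQt_eq_ball_prod_ball (r : ℝ) (z : PSpace N) :
    pQt N r z = ball z.1 r ×ˢ ball z.2 (r ^ 2) := by
  rw [pQt, Real.ball_eq_Ioo]

theorem PHcap_le_tsum_of_isParabolicCover {ι : Type*} [Countable ι] (hN : N ≠ 0) {ρ : ℝ}
    (hρ : 0 ≤ ρ) {E : Set (PSpace N)} {c : ι → PSpace N × ℝ} (hc : IsParabolicCover N ρ E c) :
    PHcap N ρ E ≤ ∑' i, ENNReal.ofReal ((c i).2 ^ N) := by
  obtain ⟨f, hf⟩ := Countable.exists_injective_nat ι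
  -- Indices outside the range of `f` get cylinders of radius `0`: empty, and free since `N ≠ 0`.
  set c' : ℕ → PSpace N × ℝ := Function.extend f c (fun _ => 0)
  have hcf : ∀ i, c' (f i) = c i := hf.extend_apply _ _
  have hc' : ∀ n, (∃ i, c' n = c i) ∨ c' n = 0 := by
    intro n
    by_cases h : ∃ i, f i = n
    · obtain ⟨i, rfl⟩ := h
      exact .inl ⟨i, hcf i⟩
    · exact .inr (Function.extend_apply' _ _ _ h)
  calc PHcap N ρ E ≤ ∑' n, ENNReal.ofReal ((c' n).2 ^ N) := by
        refine iInf₂_le c' ⟨fun n => ?_, hc.2.trans fun w hw => ?_⟩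
        · rcases hc' n with ⟨i, hi⟩ | h
          · rw [hi]; exact hc.1 i
          · simp [h, hρ]
        · obtain ⟨i, hi⟩ := mem_iUnion.1 hw
          exact mem_iUnion.2 ⟨f i, by rwa [hcf]⟩
    _ = ∑' n, Function.extend f (fun i => ENNReal.ofReal ((c i).2 ^ N)) 0 n := by
        congr 1 with n
        rw [Function.apply_extend (fun p : PSpace N × ℝ => ENNReal.ofReal (p.2 ^ N))]
        congr 1 with n
        simp [hN]
    _ = ∑' i, ENNReal.ofReal ((c i).2 ^ N) := tsum_extend_zero hf _

theorem PHcap_mono {ρ : ℝ} {E F : Set (PSpace N)} (h : E ⊆ F) : PHcap N ρ E ≤ PHcap N ρ F :=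
  le_iInf₂ fun c hc => iInf₂_le c ⟨hc.1, h.trans hc.2⟩

theorem PHcap_anti {σ ρ : ℝ} (h : σ ≤ ρ) (E : Set (PSpace N)) :
    PHcap N ρ E ≤ PHcap N σ E :=
  le_iInf₂ fun c hc => iInf₂_le c ⟨fun j => ⟨(hc.1 j).1, (hc.1 j).2.trans h⟩, hc.2⟩

theorem PHcap_iUnion_le (hN : N ≠ 0) {ρ : ℝ} (hρ : 0 ≤ ρ) (E : ℕ → Set (PSpace N)) :
    PHcap N ρ (⋃ i, E i) ≤ ∑' i, PHcap N ρ (E i) := by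
  refine ENNReal.le_of_forall_pos_le_add fun ε hε hlt => ?_
  obtain ⟨δ, hδ, hδε⟩ := ENNReal.exists_pos_sum_of_countable (ENNReal.coe_ne_zero.2 hε.ne') ℕ
  have hcover : ∀ i, ∃ c : ℕ → PSpace N × ℝ, IsParabolicCover N ρ (E i) c ∧
      ∑' j, ENNReal.ofReal ((c j).2 ^ N) < PHcap N ρ (E i) + δ i := by
    intro i
    have hfin : PHcap N ρ (E i) ≠ ⊤ := ENNReal.ne_top_of_tsum_ne_top hlt.ne i
    have := ENNReal.lt_add_right hfin (ENNReal.coe_ne_zero.2 (hδ i).ne')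
    obtain ⟨c, hlt⟩ := iInf_lt_iff.1 this
    obtain ⟨hc, hlt⟩ := iInf_lt_iff.1 hlt
    exact ⟨c, hc, hlt⟩
  choose c hc hcost using hcover
  calc PHcap N ρ (⋃ i, E i) ≤ ∑' p : ℕ × ℕ, ENNReal.ofReal ((c p.1 p.2).2 ^ N) := by
        refine PHcap_le_tsum_of_isParabolicCover hN hρ
          ⟨fun p => (hc p.1).1 p.2, iUnion_subset fun i => (hc i).2.trans ?_⟩
        exact iUnion_subset fun j => subset_iUnion_of_subset (i, j) subset_rfl
    _ = ∑' i, ∑' j, ENNReal.ofReal ((c i j).2 ^ N) :=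
        ENNReal.tsum_prod (f := fun i j => ENNReal.ofReal ((c i j).2 ^ N))
    _ ≤ ∑' i, (PHcap N ρ (E i) + δ i) := ENNReal.tsum_le_tsum fun i => (hcost i).le
    _ = ∑' i, PHcap N ρ (E i) + ∑' i, (δ i : ℝ≥0∞) := ENNReal.tsum_add
    _ ≤ ∑' i, PHcap N ρ (E i) + ε := by gcongr

theorem PHcap_pQt_le_of_le (hN : N ≠ 0) {r σ : ℝ} (hr : 0 ≤ r) (hrσ : r ≤ σ) (z : PSpace N) :
    PHcap N σ (pQt N r z) ≤ ENNReal.ofReal (r ^ N) := by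
  simpa using PHcap_le_tsum_of_isParabolicCover hN (hr.trans hrσ) (c := fun _ : Unit => (z, r))
    ⟨fun _ => ⟨hr, hrσ⟩, subset_iUnion_of_subset () subset_rfl⟩

theorem PHcap_pQt_le_of_ge (hN : N ≠ 0) {r σ : ℝ} (hσ : 0 < σ) (hσr : σ ≤ r) (z : PSpace N) :
    PHcap N σ (pQt N r z) ≤ ENNReal.ofReal (5 ^ (N + 1) * (r / σ) ^ 2 * r ^ N) := by
  have hr : 0 < r := hσ.trans_le hσr
  obtain ⟨S, hS, hSz⟩ := exists_finset_ball_cover z.1 hσ hσr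
  obtain ⟨T, hT, hTz⟩ :=
    exists_finset_ball_cover z.2 (pow_pos hσ 2) (pow_le_pow_left₀ hσ.le hσr 2)
  rw [finrank_euclideanSpace_fin] at hS
  rw [Module.finrank_self, pow_one] at hT
  have hcover : IsParabolicCover N σ (pQt N r z)
      (fun p : ↥(S ×ˢ T) => ((p.1.1, p.1.2), σ)) := by
    refine ⟨fun _ => ⟨hσ.le, le_rfl⟩, fun w hw => ?_⟩
    rw [pQt_eq_ball_prod_ball] at hw
    obtain ⟨y, hy, hwy⟩ := mem_iUnion₂.1 (hSz hw.1)
    obtain ⟨s, hs, hws⟩ := mem_iUnion₂.1 (hTz hw.2)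
    refine mem_iUnion.2 ⟨⟨(y, s), Finset.mem_product.2 ⟨hy, hs⟩⟩, ?_⟩
    rw [pQt_eq_ball_prod_ball]
    exact ⟨hwy, hws⟩
  calc PHcap N σ (pQt N r z) ≤ ∑' _ : ↥(S ×ˢ T), ENNReal.ofReal (σ ^ N) :=
        PHcap_le_tsum_of_isParabolicCover hN hσ.le hcover
    _ = ENNReal.ofReal (S.card * T.card * σ ^ N) := by
        rw [tsum_fintype, Finset.sum_const, Finset.card_univ, Fintype.card_coe,
          Finset.card_product, nsmul_eq_mul, ENNReal.ofReal_mul (by positivity)]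
        norm_cast
    _ ≤ ENNReal.ofReal (5 ^ (N + 1) * (r / σ) ^ 2 * r ^ N) := by
        refine ENNReal.ofReal_le_ofReal ?_
        calc (S.card : ℝ) * T.card * σ ^ N
            ≤ (5 * r / σ) ^ N * (5 * r ^ 2 / σ ^ 2) * σ ^ N := by gcongr
          _ = 5 ^ (N + 1) * (r / σ) ^ 2 * r ^ N := by
            rw [div_pow, mul_pow]; field_simp; ring

theorem PHcap_pQt_le_mul (hN : N ≠ 0) {r σ ρ : ℝ} (hσ : 0 < σ) (hσρ : σ ≤ ρ) (hr : 0 ≤ r)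
    (hrρ : r ≤ ρ) (z : PSpace N) :
    PHcap N σ (pQt N r z) ≤
      ENNReal.ofReal (5 ^ (N + 1) * (ρ / σ) ^ 2) * ENNReal.ofReal (r ^ N) := by
  rw [← ENNReal.ofReal_mul (by positivity)]
  rcases le_total r σ with hrσ | hσr
  · have hK : 1 ≤ 5 ^ (N + 1) * (ρ / σ) ^ 2 :=
      one_le_mul_of_one_le_of_one_le (one_le_pow₀ (by norm_num))
        (one_le_pow₀ ((one_le_div hσ).2 hσρ))
    exact (PHcap_pQt_le_of_le hN hr hrσ z).trans
      (ENNReal.ofReal_le_ofReal (le_mul_of_one_le_left (by positivity) hK))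
  · refine (PHcap_pQt_le_of_ge hN hσ hσr z).trans (ENNReal.ofReal_le_ofReal ?_)
    gcongr

end ParabolicCover

/-- Monotonicity and doubling property (1.14) of the parabolic Hausdorff capacity
`PH_ρ^N`: for `0 < σ ≤ ρ`, `PH_ρ^N(E) ≤ PH_σ^N(E) ≤ C(N) (ρ/σ)² PH_ρ^N(E)`. -/
theorem PHcap_mono_doubling (N : ℕ) (hN : 2 ≤ N) :
    ∃ C > (0 : ℝ), ∀ σ ρ : ℝ, 0 < σ → σ ≤ ρ → ∀ E : Set (PSpace N),
      PHcap N ρ E ≤ PHcap N σ E ∧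
      PHcap N σ E ≤ ENNReal.ofReal (C * (ρ / σ) ^ 2) * PHcap N ρ E := by
  have hN0 : N ≠ 0 := by omega
  refine ⟨5 ^ (N + 1), by positivity, fun σ ρ hσ hσρ E => ⟨PHcap_anti hσρ E, ?_⟩⟩
  set K := ENNReal.ofReal (5 ^ (N + 1) * (ρ / σ) ^ 2)
  have hρ : 0 < ρ := hσ.trans_le hσρ
  have hK0 : K ≠ 0 := by simp only [K, ne_eq, ENNReal.ofReal_eq_zero, not_le]; positivity
  have key : ∀ c : ℕ → PSpace N × ℝ, IsParabolicCover N ρ E c →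
      PHcap N σ E ≤ K * ∑' j, ENNReal.ofReal ((c j).2 ^ N) := fun c hc =>
    calc PHcap N σ E ≤ PHcap N σ (⋃ j, pQt N (c j).2 (c j).1) := PHcap_mono hc.2
      _ ≤ ∑' j, PHcap N σ (pQt N (c j).2 (c j).1) := PHcap_iUnion_le hN0 hσ.le _
      _ ≤ ∑' j, K * ENNReal.ofReal ((c j).2 ^ N) := ENNReal.tsum_le_tsum fun j =>
          PHcap_pQt_le_mul hN0 hσ hσρ (hc.1 j).1 (hc.1 j).2 _
      _ = K * ∑' j, ENNReal.ofReal ((c j).2 ^ N) := ENNReal.tsum_mul_left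
  calc PHcap N σ E ≤ ⨅ (c) (_ : IsParabolicCover N ρ E c), K * ∑' j, ENNReal.ofReal ((c j).2 ^ N) :=
        le_iInf₂ key
    _ = K * PHcap N ρ E := by simp_rw [PHcap, ENNReal.mul_iInf_of_ne hK0 ENNReal.ofReal_ne_top]; rfl
end

section
/- Let N ≥ 2 and R > 0. There exist positive constants C₁, C₂ (depending only on N and R) such that for every nonnegative Radon measure μ on ℝ^{N+1} with ‖M_2^R[μ]‖_{L^∞(ℝ^{N+1})} ≤ 1, and for every cylinder Q = Q̃_r(y,s) ⊂ ℝ^{N+1} with r > 0, one has (1/|Q|) ∫_Q exp( C₁ I_2^R[χ_Q μ] ) dx dt ≤ C₂, where χ_Q μ is the restriction of μ to Q and |Q| is the Lebesgue measure of Q. -/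
open MeasureTheory Metric Set
open scoped ENNReal NNReal

/-! The bound `M_2^R[μ] ≤ 1` says `μ(Q̃_ρ(w)) ≤ ρ^N` for `ρ < R`. Put `ν = χ_Q μ`,
`s = min(r, R/2)` and `δ = s e^{-t}`. Averaging `ν(Q̃_s(w))` over `w` (Fubini) bounds the total
mass: `ν(ℝ^{N+1}) |Q̃_s| ≤ s^N |Q̃_{r+s}|`. In the `ρ`-integral defining `I_2^R[ν](w)`, the range
`[δ, s)` contributes at most `∫ dρ/ρ = t`, and the range `[s, R)` a constant (through `∫ dρ/ρ` if
`s = R/2`, through the total mass if `s = r`). The rest is `I_2^δ[ν]`, whose integral over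
`ℝ^{N+1}` is `ν(ℝ^{N+1}) |B_1| δ²` by Fubini, so Chebyshev gives
`|{I_2^R[ν] ≥ C + t}| ≲ |Q| e^{-2t}`. This decay beats `e^t`, so summing over the level sets
`t = n` bounds `∫_Q exp(I_2^R[ν])` by a multiple of `|Q|`. -/

open Real

section Cylinders

variable {N : ℕ}

lemma mem_pQt {ρ : ℝ} {z u : PSpace N} :
    u ∈ pQt N ρ z ↔ dist u.1 z.1 < ρ ∧ z.2 - ρ ^ 2 < u.2 ∧ u.2 < z.2 + ρ ^ 2 := by
  simp [pQt, mem_ball]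

lemma mem_pQt_comm {ρ : ℝ} {z u : PSpace N} : u ∈ pQt N ρ z ↔ z ∈ pQt N ρ u := by
  simp only [mem_pQt, dist_comm u.1]
  constructor <;> rintro ⟨h₁, h₂, h₃⟩ <;> exact ⟨h₁, by linarith, by linarith⟩

lemma mem_pQt_add_of_mem_pQt {r s : ℝ} {z w u : PSpace N} (hr : 0 ≤ r) (hs : 0 ≤ s)
    (huz : u ∈ pQt N r z) (huw : u ∈ pQt N s w) : w ∈ pQt N (r + s) z := by
  rw [mem_pQt] at *
  obtain ⟨hxz, htz₁, htz₂⟩ := huz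
  obtain ⟨hxw, htw₁, htw₂⟩ := huw
  refine ⟨(dist_triangle w.1 u.1 z.1).trans_lt ?_, by nlinarith, by nlinarith⟩
  rw [dist_comm]
  linarith

lemma isOpen_setOf_mem_pQt :
    IsOpen {q : (PSpace N × ℝ) × PSpace N | q.2 ∈ pQt N q.1.2 q.1.1} := by
  simp only [mem_pQt, ofPred_and]
  exact (isOpen_lt (by fun_prop) (by fun_prop)).inter
    ((isOpen_lt (by fun_prop) (by fun_prop)).inter (isOpen_lt (by fun_prop) (by fun_prop)))

lemma measurableSet_pQt (ρ : ℝ) (z : PSpace N) : MeasurableSet (pQt N ρ z) :=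
  (isOpen_ball.prod isOpen_Ioo).measurableSet

noncomputable def unitBallVolume (N : ℕ) : ℝ≥0∞ :=
  volume (ball (0 : EuclideanSpace ℝ (Fin N)) 1)

lemma volume_pQt {ρ : ℝ} (hρ : 0 < ρ) (z : PSpace N) :
    volume (pQt N ρ z) = unitBallVolume N * ENNReal.ofReal (2 * ρ ^ (N + 2)) := by
  rw [pQt, Measure.volume_eq_prod, Measure.prod_prod, Real.volume_Ioo,
    Measure.addHaar_ball_of_pos volume z.1 hρ, finrank_euclideanSpace_fin,
    show z.2 + ρ ^ 2 - (z.2 - ρ ^ 2) = 2 * ρ ^ 2 by ring, mul_right_comm,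
    ← ENNReal.ofReal_mul (by positivity), mul_comm, unitBallVolume]
  congr 2
  ring

lemma volume_pQt_ne_zero {ρ : ℝ} (hρ : 0 < ρ) (z : PSpace N) : volume (pQt N ρ z) ≠ 0 :=
  ((isOpen_ball.prod isOpen_Ioo).measure_pos _ ⟨z, mem_ball_self hρ,
    by simp only [mem_Ioo]; constructor <;> nlinarith⟩).ne'

lemma volume_pQt_ne_top (ρ : ℝ) (z : PSpace N) : volume (pQt N ρ z) ≠ ⊤ :=
  (isBounded_ball.prod (isBounded_Ioo _ _)).measure_lt_top.ne

lemma measure_pQt_le_maxPot_mul {μ : Measure (PSpace N)} {R ρ : ℝ} (hρ : ρ ∈ Ioo 0 R)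
    (z : PSpace N) : μ (pQt N ρ z) ≤ maxPot N R μ z * ENNReal.ofReal (ρ ^ N) :=
  (ENNReal.div_le_iff_le_mul (.inl (ENNReal.ofReal_pos.2 (pow_pos hρ.1 N)).ne')
    (.inl ENNReal.ofReal_ne_top)).1
    (le_iSup₂ (f := fun ρ (_ : ρ ∈ Ioo 0 R) => μ (pQt N ρ z) / ENNReal.ofReal (ρ ^ N))
      ρ hρ)

end Cylinders

lemma lintegral_Ioo_ofReal_two_mul {δ : ℝ} (hδ : 0 ≤ δ) :
    ∫⁻ x in Ioo 0 δ, ENNReal.ofReal (2 * x) = ENNReal.ofReal (δ ^ 2) := by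
  rw [Measure.restrict_congr_set Ioo_ae_eq_Ioc, ← ofReal_integral_eq_lintegral_ofReal
    (by fun_prop : Continuous fun x : ℝ => 2 * x).integrableOn_Ioc
    (ae_restrict_of_forall_mem measurableSet_Ioc fun x hx => mul_nonneg zero_le_two hx.1.le),
    ← intervalIntegral.integral_of_le hδ, intervalIntegral.integral_const_mul, integral_id]
  congr 1
  ring

lemma lintegral_Ico_ofReal_inv {a b : ℝ} (ha : 0 < a) (hab : a ≤ b) :
    ∫⁻ x in Ico a b, ENNReal.ofReal x⁻¹ = ENNReal.ofReal (Real.log (b / a)) := by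
  rw [Measure.restrict_congr_set Ico_ae_eq_Ioc, ← ofReal_integral_eq_lintegral_ofReal
    ((continuousOn_inv₀.mono fun x hx => (ha.trans_le hx.1).ne').integrableOn_Icc.mono_set
      Ioc_subset_Icc_self)
    (ae_restrict_of_forall_mem measurableSet_Ioc fun x hx => inv_nonneg.2 (ha.trans hx.1).le),
    ← intervalIntegral.integral_of_le hab, integral_inv_of_pos ha (ha.trans_le hab)]

lemma lintegral_Ioi_ofReal_inv_pow_succ {N : ℕ} (hN : N ≠ 0) {a : ℝ} (ha : 0 < a) :
    ∫⁻ x in Ioi a, ENNReal.ofReal (x ^ (N + 1))⁻¹ = ENNReal.ofReal (N * a ^ N)⁻¹ := by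
  have hexp : -((N : ℝ) + 1) < -1 := by
    have : (0 : ℝ) < N := by positivity
    linarith
  have hrpow : ∀ x ∈ Ioi a, ENNReal.ofReal (x ^ (N + 1))⁻¹
      = ENNReal.ofReal (x ^ (-((N : ℝ) + 1))) := fun x hx => by
    rw [Real.rpow_neg (ha.trans hx).le, ← Nat.cast_add_one, Real.rpow_natCast]
  rw [setLIntegral_congr_fun measurableSet_Ioi hrpow, ← ofReal_integral_eq_lintegral_ofReal
    (integrableOn_Ioi_rpow_of_lt hexp ha)
    (ae_restrict_of_forall_mem measurableSet_Ioi fun x hx =>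
      (Real.rpow_pos_of_pos (ha.trans hx) _).le),
    integral_Ioi_rpow_of_lt hexp ha]
  congr 1
  rw [show -((N : ℝ) + 1) + 1 = -N by ring, Real.rpow_neg ha.le, Real.rpow_natCast]
  field_simp

section Fubini

variable {N : ℕ} (ν : Measure (PSpace N)) [SFinite ν]

lemma measurable_measure_pQt_div :
    Measurable fun p : PSpace N × ℝ => ν (pQt N p.2 p.1) / ENNReal.ofReal (p.2 ^ (N + 1)) :=
  (measurable_measure_prodMk_left isOpen_setOf_mem_pQt.measurableSet).div
    (measurable_snd.pow_const _).ennreal_ofReal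

lemma measurable_riesz (R : ℝ) : Measurable (riesz N R ν) :=
  (measurable_measure_pQt_div ν).lintegral_prod_right

lemma lintegral_measure_pQt {ρ : ℝ} (hρ : 0 < ρ) :
    ∫⁻ w, ν (pQt N ρ w)
      = ν univ * (unitBallVolume N * ENNReal.ofReal (2 * ρ ^ (N + 2))) := by
  have hS : MeasurableSet {q : PSpace N × PSpace N | q.2 ∈ pQt N ρ q.1} :=
    (isOpen_setOf_mem_pQt.preimage
      (by fun_prop : Continuous fun q : PSpace N × PSpace N => ((q.1, ρ), q.2))).measurableSet
  calc ∫⁻ w, ν (pQt N ρ w) = (volume.prod ν) {q | q.2 ∈ pQt N ρ q.1} :=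
        (Measure.prod_apply hS).symm
    _ = ∫⁻ u, volume (pQt N ρ u) ∂ν := by
      rw [Measure.prod_apply_symm hS]
      refine lintegral_congr fun u => congrArg volume (ext fun w => ?_)
      exact mem_pQt_comm (z := w) (u := u)
    _ = _ := by simp_rw [volume_pQt hρ, lintegral_const, mul_comm]

lemma lintegral_riesz {δ : ℝ} (hδ : 0 ≤ δ) :
    ∫⁻ w, riesz N δ ν w = ν univ * unitBallVolume N * ENNReal.ofReal (δ ^ 2) := by
  unfold riesz
  rw [lintegral_lintegral_swap (measurable_measure_pQt_div ν).aemeasurable,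
    ← lintegral_Ioo_ofReal_two_mul hδ, ← lintegral_const_mul _ (by fun_prop)]
  refine setLIntegral_congr_fun measurableSet_Ioo fun ρ hρ => ?_
  have hρ₀ : 0 < ρ := hρ.1
  simp only [div_eq_mul_inv]
  rw [lintegral_mul_const' _ _ (ENNReal.inv_ne_top.2 (ENNReal.ofReal_pos.2 (by positivity)).ne'),
    lintegral_measure_pQt ν hρ₀, ← ENNReal.ofReal_inv_of_pos (by positivity), mul_assoc,
    mul_assoc, mul_assoc, ← ENNReal.ofReal_mul (by positivity)]
  congr 3
  field_simp
  ring

lemma measure_univ_le_of_measure_pQt_le {r s : ℝ} (hr : 0 < r) (hs : 0 < s) {z₀ : PSpace N}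
    (hsupp : ν (pQt N r z₀)ᶜ = 0) (hsmall : ∀ w, ν (pQt N s w) ≤ ENNReal.ofReal (s ^ N)) :
    ν univ ≤ ENNReal.ofReal ((r + s) ^ (N + 2) / s ^ 2) := by
  have hpoint : ∀ w, ν (pQt N s w)
      ≤ (pQt N (r + s) z₀).indicator (fun _ => ENNReal.ofReal (s ^ N)) w := fun w => by
    by_cases hw : w ∈ pQt N (r + s) z₀
    · simpa [indicator_of_mem hw] using hsmall w
    · rw [indicator_of_notMem hw]
      exact (measure_mono_null (fun u hu huQ => hw (mem_pQt_add_of_mem_pQt hr.le hs.le huQ hu))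
        hsupp).le
  have hcount :
      ν univ * volume (pQt N s z₀) ≤ ENNReal.ofReal (s ^ N) * volume (pQt N (r + s) z₀) :=
    calc ν univ * volume (pQt N s z₀) = ∫⁻ w, ν (pQt N s w) := by
          rw [lintegral_measure_pQt ν hs, volume_pQt hs]
      _ ≤ ∫⁻ w, (pQt N (r + s) z₀).indicator (fun _ => ENNReal.ofReal (s ^ N)) w :=
          lintegral_mono hpoint
      _ = ENNReal.ofReal (s ^ N) * volume (pQt N (r + s) z₀) :=
          lintegral_indicator_const (measurableSet_pQt _ _) _
  rw [← ENNReal.mul_le_mul_iff_left (volume_pQt_ne_zero hs z₀) (volume_pQt_ne_top s z₀)]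
  refine hcount.trans_eq ?_
  rw [volume_pQt hs, volume_pQt (by positivity), mul_left_comm,
    mul_left_comm (ENNReal.ofReal _), ← ENNReal.ofReal_mul (by positivity),
    ← ENNReal.ofReal_mul (by positivity)]
  congr 2
  field_simp
  ring

end Fubini

section RieszBounds

variable {N : ℕ} (ν : Measure (PSpace N))

lemma riesz_le_riesz_add_lintegral_Ico_add_lintegral_Ico (R δ s : ℝ) (w : PSpace N) :
    riesz N R ν w ≤ riesz N δ ν w
      + ((∫⁻ ρ in Ico δ s, ν (pQt N ρ w) / ENNReal.ofReal (ρ ^ (N + 1)))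
        + ∫⁻ ρ in Ico s R, ν (pQt N ρ w) / ENNReal.ofReal (ρ ^ (N + 1))) := by
  have hcover : Ioo 0 R ⊆ Ioo 0 δ ∪ (Ico δ s ∪ Ico s R) := fun x ⟨hx₀, hxR⟩ => by
    rcases lt_or_ge x δ with hxδ | hxδ
    · exact .inl ⟨hx₀, hxδ⟩
    rcases lt_or_ge x s with hxs | hxs
    · exact .inr (.inl ⟨hxδ, hxs⟩)
    · exact .inr (.inr ⟨hxs, hxR⟩)
  exact (lintegral_mono_set hcover).trans <| (lintegral_union_le _ _ _).trans <|
    add_le_add_right (lintegral_union_le _ _ _) _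

lemma lintegral_Ico_le_log {w : PSpace N} {a b : ℝ} (ha : 0 < a) (hab : a ≤ b)
    (hsmall : ∀ ρ ∈ Ico a b, ν (pQt N ρ w) ≤ ENNReal.ofReal (ρ ^ N)) :
    ∫⁻ ρ in Ico a b, ν (pQt N ρ w) / ENNReal.ofReal (ρ ^ (N + 1))
      ≤ ENNReal.ofReal (Real.log (b / a)) := by
  rw [← lintegral_Ico_ofReal_inv ha hab]
  refine setLIntegral_mono (by fun_prop) fun ρ hρ => ?_
  have hρ₀ : 0 < ρ := ha.trans_le hρ.1
  calc ν (pQt N ρ w) / ENNReal.ofReal (ρ ^ (N + 1))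
      ≤ ENNReal.ofReal (ρ ^ N) / ENNReal.ofReal (ρ ^ (N + 1)) :=
        ENNReal.div_le_div_right (hsmall ρ hρ) _
    _ = ENNReal.ofReal ρ⁻¹ := by
        rw [← ENNReal.ofReal_div_of_pos (by positivity)]
        congr 1
        field_simp
        ring

lemma lintegral_Ico_le_measure_univ_mul (hN : N ≠ 0) (w : PSpace N) {a : ℝ} (ha : 0 < a) (b : ℝ) :
    ∫⁻ ρ in Ico a b, ν (pQt N ρ w) / ENNReal.ofReal (ρ ^ (N + 1))
      ≤ ν univ * ENNReal.ofReal (N * a ^ N)⁻¹ :=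
  calc ∫⁻ ρ in Ico a b, ν (pQt N ρ w) / ENNReal.ofReal (ρ ^ (N + 1))
      ≤ ∫⁻ ρ in Ioi a, ν univ * ENNReal.ofReal (ρ ^ (N + 1))⁻¹ := by
        rw [Measure.restrict_congr_set Ioi_ae_eq_Ici]
        refine (lintegral_mono_set Ico_subset_Ici_self).trans
          (setLIntegral_mono (by fun_prop) fun ρ hρ => ?_)
        rw [div_eq_mul_inv, ENNReal.ofReal_inv_of_pos (pow_pos (ha.trans_le hρ) _)]
        exact mul_le_mul_left (measure_mono (subset_univ _)) _
    _ = ν univ * ENNReal.ofReal (N * a ^ N)⁻¹ := by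
        rw [lintegral_const_mul _ (by fun_prop), lintegral_Ioi_ofReal_inv_pow_succ hN ha]

lemma lintegral_Ico_min_le_of_measure_univ_le (hN : N ≠ 0) {w : PSpace N} {r R : ℝ}
    (hr : 0 < r) (hR : 0 < R)
    (hsmall : ∀ ρ ∈ Ioo 0 R, ν (pQt N ρ w) ≤ ENNReal.ofReal (ρ ^ N))
    (hmass : ν univ ≤ ENNReal.ofReal ((2 * r) ^ (N + 2) / min r (R / 2) ^ 2)) :
    ∫⁻ ρ in Ico (min r (R / 2)) R, ν (pQt N ρ w) / ENNReal.ofReal (ρ ^ (N + 1))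
      ≤ ENNReal.ofReal (1 + 2 ^ (N + 2) / N) := by
  rcases le_total r (R / 2) with hrR | hRr
  · rw [min_eq_left hrR] at hmass ⊢
    calc _ ≤ ν univ * ENNReal.ofReal (N * r ^ N)⁻¹ := lintegral_Ico_le_measure_univ_mul ν hN w hr R
      _ ≤ ENNReal.ofReal ((2 * r) ^ (N + 2) / r ^ 2) * ENNReal.ofReal (N * r ^ N)⁻¹ := by
        gcongr
      _ = ENNReal.ofReal (2 ^ (N + 2) / N) := by
        rw [← ENNReal.ofReal_mul (by positivity)]
        congr 1
        field_simp
        ring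
      _ ≤ _ := ENNReal.ofReal_le_ofReal (by linarith)
  · rw [min_eq_right hRr]
    refine (lintegral_Ico_le_log ν (half_pos hR) (half_le_self hR.le)
      fun ρ hρ => hsmall ρ ⟨(half_pos hR).trans_le hρ.1, hρ.2⟩).trans
      (ENNReal.ofReal_le_ofReal ?_)
    rw [div_div_cancel₀ hR.ne']
    have : (0 : ℝ) ≤ 2 ^ (N + 2) / N := by positivity
    linarith [Real.log_two_lt_d9]

variable [SFinite ν]

lemma volume_setOf_le_riesz_le (hN : N ≠ 0) {r R : ℝ} (hr : 0 < r) (hR : 0 < R)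
    {z₀ : PSpace N} (hsupp : ν (pQt N r z₀)ᶜ = 0)
    (hsmall : ∀ ρ ∈ Ioo 0 R, ∀ w, ν (pQt N ρ w) ≤ ENNReal.ofReal (ρ ^ N))
    {t : ℝ} (ht : 0 ≤ t) :
    volume {w | ENNReal.ofReal (2 + 2 ^ (N + 2) / N + t) ≤ riesz N R ν w}
      ≤ 2 ^ (N + 1) * volume (pQt N r z₀) * ENNReal.ofReal (exp (-(2 * t))) := by
  set s := min r (R / 2)
  have hs : 0 < s := lt_min hr (half_pos hR)
  have hsR : s < R := (min_le_right _ _).trans_lt (half_lt_self hR)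
  set δ := s * exp (-t) with hδ_def
  have hδ : 0 < δ := by positivity
  have hδs : δ ≤ s := mul_le_of_le_one_right hs.le (exp_le_one_iff.2 (by linarith))
  have hmass : ν univ ≤ ENNReal.ofReal ((2 * r) ^ (N + 2) / s ^ 2) :=
    (measure_univ_le_of_measure_pQt_le ν hr hs hsupp (hsmall s ⟨hs, hsR⟩)).trans
      (ENNReal.ofReal_le_ofReal (by gcongr; linarith [min_le_left r (R / 2)]))
  have hsplit : ∀ w, riesz N R ν w
      ≤ riesz N δ ν w + ENNReal.ofReal (t + (1 + 2 ^ (N + 2) / N)) := fun w =>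
    calc riesz N R ν w ≤ _ := riesz_le_riesz_add_lintegral_Ico_add_lintegral_Ico ν R δ s w
      _ ≤ riesz N δ ν w + (ENNReal.ofReal t + ENNReal.ofReal (1 + 2 ^ (N + 2) / N)) := by
        gcongr
        · calc _ ≤ ENNReal.ofReal (log (s / δ)) := lintegral_Ico_le_log ν hδ hδs
                fun ρ hρ => hsmall ρ ⟨hδ.trans_le hρ.1, hρ.2.trans hsR⟩ w
            _ = ENNReal.ofReal t := by
              rw [div_mul_cancel_left₀ hs.ne', exp_neg, inv_inv, log_exp]
        · exact lintegral_Ico_min_le_of_measure_univ_le ν hN hr hR (fun ρ hρ => hsmall ρ hρ w)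
            hmass
      _ = _ := by rw [ENNReal.ofReal_add ht (by positivity)]
  have hlevel : {w | ENNReal.ofReal (2 + 2 ^ (N + 2) / N + t) ≤ riesz N R ν w}
      ⊆ {w | 1 ≤ riesz N δ ν w} := fun w hw => by
    have := hw.trans (hsplit w)
    rw [show 2 + 2 ^ (N + 2) / N + t = 1 + (t + (1 + 2 ^ (N + 2) / N)) by ring,
      ENNReal.ofReal_add zero_le_one (by positivity), ENNReal.ofReal_one] at this
    exact (ENNReal.add_le_add_iff_right ENNReal.ofReal_ne_top).1 this
  calc volume {w | ENNReal.ofReal (2 + 2 ^ (N + 2) / N + t) ≤ riesz N R ν w}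
      ≤ volume {w | 1 ≤ riesz N δ ν w} := measure_mono hlevel
    _ ≤ ∫⁻ w, riesz N δ ν w := by
      simpa using meas_ge_le_lintegral_div (measurable_riesz ν δ).aemeasurable one_ne_zero
        ENNReal.one_ne_top
    _ = ν univ * unitBallVolume N * ENNReal.ofReal (δ ^ 2) := lintegral_riesz ν hδ.le
    _ ≤ ENNReal.ofReal ((2 * r) ^ (N + 2) / s ^ 2) * unitBallVolume N
          * ENNReal.ofReal (δ ^ 2) := by
      gcongr
    _ = unitBallVolume N * ENNReal.ofReal (2 ^ (N + 1) * (2 * r ^ (N + 2)) * exp (-(2 * t))) := by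
      rw [mul_right_comm, mul_comm, ← ENNReal.ofReal_mul (by positivity)]
      have he : exp (-t) ^ 2 = exp (-(2 * t)) := by
        rw [← Real.exp_nat_mul]
        ring_nf
      congr 2
      rw [hδ_def, mul_pow s, he]
      field_simp
      ring
    _ = _ := by
      rw [volume_pQt hr, ENNReal.ofReal_mul (by positivity), ENNReal.ofReal_mul (by positivity),
        ENNReal.ofReal_pow zero_le_two, ENNReal.ofReal_ofNat]
      ring

end RieszBounds

lemma expE_le_add_tsum_indicator (c : ℝ) (x : ℝ≥0∞) :
    expE x ≤ ENNReal.ofReal (exp c) + ∑' n : ℕ,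
      (Ici (ENNReal.ofReal (c + n))).indicator (fun _ => ENNReal.ofReal (exp (c + n + 1))) x := by
  by_cases hx : x = ⊤
  · have htop : ∑' n : ℕ, (Ici (ENNReal.ofReal (c + n))).indicator
        (fun _ => ENNReal.ofReal (exp (c + n + 1))) x = ⊤ := by
      refine top_le_iff.1 ((ENNReal.tsum_const_eq_top_of_ne_zero
        (ENNReal.ofReal_pos.2 (exp_pos (c + 1))).ne').symm.le.trans
        (ENNReal.tsum_le_tsum fun n => ?_))
      rw [indicator_of_mem (by simp [hx])]
      exact ENNReal.ofReal_le_ofReal (exp_le_exp.2 (by linarith [n.cast_nonneg (α := ℝ)]))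
    simp [htop]
  rw [expE, if_neg hx]
  rcases lt_or_ge x.toReal c with hxc | hxc
  · exact le_add_right (ENNReal.ofReal_le_ofReal (exp_le_exp.2 hxc.le))
  set n := ⌊x.toReal - c⌋₊
  have hn : (n : ℝ) ≤ x.toReal - c := Nat.floor_le (by linarith)
  have hn' : x.toReal - c < n + 1 := Nat.lt_floor_add_one _
  calc ENNReal.ofReal (exp x.toReal)
      ≤ (Ici (ENNReal.ofReal (c + n))).indicator
          (fun _ => ENNReal.ofReal (exp (c + n + 1))) x := by
        rw [indicator_of_mem (mem_Ici.2 ((ENNReal.ofReal_le_iff_le_toReal hx).2 (by linarith)))]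
        exact ENNReal.ofReal_le_ofReal (exp_le_exp.2 (by linarith))
    _ ≤ _ := ENNReal.le_tsum n
    _ ≤ _ := le_add_self

lemma ofReal_exp_neg_natCast_le (n : ℕ) : ENNReal.ofReal (exp (-n)) ≤ 2⁻¹ ^ n := by
  rw [show -(n : ℝ) = n * (-1) by ring, Real.exp_nat_mul, ENNReal.ofReal_pow (exp_pos _).le]
  gcongr
  calc ENNReal.ofReal (exp (-1)) ≤ ENNReal.ofReal (1 / 2) :=
        ENNReal.ofReal_le_ofReal Real.exp_neg_one_lt_half.le
    _ = 2⁻¹ := by rw [one_div, ENNReal.ofReal_inv_of_pos two_pos, ENNReal.ofReal_ofNat]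

lemma lintegral_expE_le {α : Type*} [MeasurableSpace α] (μ : Measure α) {f : α → ℝ≥0∞}
    (hf : Measurable f) (c : ℝ) (A : ℝ≥0∞)
    (hlevel : ∀ n : ℕ,
      μ {w | ENNReal.ofReal (c + n) ≤ f w} ≤ A * ENNReal.ofReal (exp (-(2 * n)))) :
    ∫⁻ w, expE (f w) ∂μ
      ≤ ENNReal.ofReal (exp c) * μ univ + 2 * ENNReal.ofReal (exp (c + 1)) * A :=
  calc ∫⁻ w, expE (f w) ∂μ
      ≤ ∫⁻ w, ENNReal.ofReal (exp c) + ∑' n : ℕ,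
          (f ⁻¹' Ici (ENNReal.ofReal (c + n))).indicator
            (fun _ => ENNReal.ofReal (exp (c + n + 1))) w ∂μ :=
        lintegral_mono fun w => expE_le_add_tsum_indicator c (f w)
    _ = ENNReal.ofReal (exp c) * μ univ
          + ∑' n : ℕ,
            ENNReal.ofReal (exp (c + n + 1)) * μ {w | ENNReal.ofReal (c + n) ≤ f w} := by
        rw [lintegral_add_left measurable_const, lintegral_const, lintegral_tsum fun n =>
          (measurable_const.indicator (hf measurableSet_Ici)).aemeasurable]
        congr 1
        exact tsum_congr fun n => lintegral_indicator_const (hf measurableSet_Ici) _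
    _ ≤ ENNReal.ofReal (exp c) * μ univ
          + ∑' n : ℕ, ENNReal.ofReal (exp (c + 1)) * A * 2⁻¹ ^ n := by
        refine add_le_add_right (ENNReal.tsum_le_tsum fun n => ?_) _
        calc ENNReal.ofReal (exp (c + n + 1)) * μ {w | ENNReal.ofReal (c + n) ≤ f w}
            ≤ ENNReal.ofReal (exp (c + n + 1)) * (A * ENNReal.ofReal (exp (-(2 * n)))) := by
              gcongr
              exact hlevel n
          _ = ENNReal.ofReal (exp (c + 1)) * A * ENNReal.ofReal (exp (-n)) := by
              rw [mul_comm A, ← mul_assoc, ← ENNReal.ofReal_mul (exp_pos _).le, ← exp_add,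
                show c + n + 1 + -(2 * n) = c + 1 + -n by ring, exp_add,
                ENNReal.ofReal_mul (exp_pos _).le, mul_right_comm]
          _ ≤ _ := by gcongr; exact ofReal_exp_neg_natCast_le n
    _ = _ := by
        rw [ENNReal.tsum_mul_left, ENNReal.tsum_geometric, ENNReal.one_sub_inv_two, inv_inv]
        ring

/-- **Theorem 2.3.** Exponential integrability of the truncated Riesz parabolic
potential of a measure whose fractional maximal potential is bounded by `1`:
`⨍_Q exp(C₁ I_2^R[χ_Q μ]) ≤ C₂` for every cylinder `Q = Q̃_r(y,s)`. -/
theorem exp_integrability_riesz_potential (N : ℕ) (hN : 2 ≤ N) (R : ℝ) (hR : 0 < R) :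
    ∃ C₁ > (0 : ℝ), ∃ C₂ > (0 : ℝ), ∀ μ : Measure (PSpace N), IsLocallyFiniteMeasure μ →
      (∀ z : PSpace N, maxPot N R μ z ≤ 1) →
      ∀ r > (0 : ℝ), ∀ z₀ : PSpace N,
        (∫⁻ w in pQt N r z₀, expE (ENNReal.ofReal C₁ * riesz N R (μ.restrict (pQt N r z₀)) w))
          ≤ ENNReal.ofReal C₂ * volume (pQt N r z₀) := by
  set c : ℝ := 2 + 2 ^ (N + 2) / N
  refine ⟨1, one_pos, exp c + 2 * exp (c + 1) * 2 ^ (N + 1), by positivity, ?_⟩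
  intro μ _ hμ r hr z₀
  set Q := pQt N r z₀
  have hsupp : μ.restrict Q Qᶜ = 0 := by
    rw [Measure.restrict_apply (measurableSet_pQt r z₀).compl, compl_inter_self, measure_empty]
  have hsmall : ∀ ρ ∈ Ioo 0 R, ∀ w, μ.restrict Q (pQt N ρ w) ≤ ENNReal.ofReal (ρ ^ N) :=
    fun ρ hρ w => (Measure.restrict_apply_le _ _).trans <|
      (measure_pQt_le_maxPot_mul hρ w).trans (mul_le_of_le_one_left zero_le (hμ w))
  have hlevel (n : ℕ) := volume_setOf_le_riesz_le (μ.restrict Q) (by omega) hr hR hsupp hsmall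
    n.cast_nonneg
  simp_rw [ENNReal.ofReal_one, one_mul]
  calc ∫⁻ w in Q, expE (riesz N R (μ.restrict Q) w)
      ≤ ENNReal.ofReal (exp c) * volume Q
        + 2 * ENNReal.ofReal (exp (c + 1)) * (2 ^ (N + 1) * volume Q) := by
        simpa [Measure.restrict_apply_univ] using lintegral_expE_le (volume.restrict Q)
          (measurable_riesz _ R) c _ fun n => (Measure.restrict_apply_le _ _).trans (hlevel n)
    _ = ENNReal.ofReal (exp c + 2 * exp (c + 1) * 2 ^ (N + 1)) * volume Q := by
        rw [ENNReal.ofReal_add (by positivity) (by positivity), ENNReal.ofReal_mul (by positivity),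
          ENNReal.ofReal_mul (by positivity), ENNReal.ofReal_pow zero_le_two, ENNReal.ofReal_ofNat]
        ring
end

section
/- Let N ≥ 2 and R > 0. There exists a constant C₂ = C₂(N) > 0 such that for every nonnegative bounded Radon measure μ on ℝ^{N+1} supported in Q̃_R(0,0), for every (x,t) ∈ Q̃_R(0,0) and every ρ > 0 with B_ρ(x) ⊂ B_R(0), one has (ℍ * μ)(x,t) ≥ C₂ Σ_{k=0}^∞ μ( Q_{ρ_k/8}(x, t − (35/128)ρ_k²) ) ρ_k^{−N}, where ρ_k = 4^{−k} ρ. -/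
open MeasureTheory Metric Set
open scoped ENNReal NNReal

/-!
The cylinders `Q_k = Q_{ρ_k/8}(x, t - (35/128) ρ_k²)` sit at time lags `t - s ∈ [35/128, 37/128) ρ_k²`,
and since `ρ_{k+1} = ρ_k / 4` these lag windows are pairwise disjoint. On `Q_k` the Gaussian is
bounded below by `C₂ ρ_k^{-N}`: the prefactor `(4πτ)^{-N/2}` by its value at the largest lag, the
exponential by `exp(-1/70)`, because `|x - y|² < ρ_k²/64` and `4τ ≥ (35/32) ρ_k²`. Summing these
bounds over the disjoint `Q_k` gives the claim.
-/

open Function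

theorem MeasureTheory.tsum_mul_measure_le_lintegral {α ι : Type*} [MeasurableSpace α]
    [Countable ι] {μ : Measure α} {s : ι → Set α} (hs : ∀ i, MeasurableSet (s i))
    (hdisj : Pairwise (Disjoint on s)) {c : ι → ℝ≥0∞} {f : α → ℝ≥0∞}
    (hf : ∀ i, ∀ x ∈ s i, c i ≤ f x) :
    ∑' i, c i * μ (s i) ≤ ∫⁻ x, f x ∂μ :=
  calc ∑' i, c i * μ (s i)
      = ∑' i, ∫⁻ _ in s i, c i ∂μ := by simp only [setLIntegral_const]
    _ ≤ ∑' i, ∫⁻ x in s i, f x ∂μ := ENNReal.tsum_le_tsum fun i => setLIntegral_mono' (hs i) (hf i)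
    _ = ∫⁻ x in ⋃ i, s i, f x ∂μ := (lintegral_iUnion hs hdisj f).symm
    _ ≤ ∫⁻ x, f x ∂μ := setLIntegral_le_lintegral _ _

lemma Real.rpow_sq_neg_half (N : ℕ) {r : ℝ} (hr : 0 < r) :
    (r ^ 2) ^ (-(N : ℝ) / 2) = (r ^ N)⁻¹ := by
  rw [← Real.rpow_natCast r 2, ← Real.rpow_mul hr.le,
    show ((2 : ℕ) : ℝ) * (-(N : ℝ) / 2) = -(N : ℝ) by push_cast; ring,
    Real.rpow_neg hr.le, Real.rpow_natCast]

noncomputable def heatLowerConst (N : ℕ) : ℝ :=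
  (37 * Real.pi / 32) ^ (-(N : ℝ) / 2) * Real.exp (-(1 / 70))

lemma heatLowerConst_pos (N : ℕ) : 0 < heatLowerConst N := by
  unfold heatLowerConst
  have := Real.pi_pos
  positivity

lemma heatLowerConst_div_le_heatK (N : ℕ) {r τ : ℝ} {y : EuclideanSpace ℝ (Fin N)}
    (hr : 0 < r) (hτ₁ : 35 / 128 * r ^ 2 ≤ τ) (hτ₂ : τ ≤ 37 / 128 * r ^ 2)
    (hy : ‖y‖ ≤ r / 8) :
    heatLowerConst N / r ^ N ≤ heatK N (y, τ) := by
  have hπ := Real.pi_pos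
  have hτ : 0 < τ := lt_of_lt_of_le (by positivity) hτ₁
  have hprefactor : (37 * Real.pi / 32 * r ^ 2) ^ (-(N : ℝ) / 2)
      ≤ (4 * Real.pi * τ) ^ (-(N : ℝ) / 2) :=
    Real.rpow_le_rpow_of_nonpos (by positivity) (by nlinarith)
      (by rw [neg_div]; exact neg_nonpos.mpr (by positivity))
  have hexp : Real.exp (-(1 / 70)) ≤ Real.exp (-‖y‖ ^ 2 / (4 * τ)) := by
    rw [Real.exp_le_exp, neg_div, neg_le_neg_iff, div_le_div_iff₀ (by positivity) (by norm_num)]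
    nlinarith [norm_nonneg y]
  calc heatLowerConst N / r ^ N
      = (37 * Real.pi / 32 * r ^ 2) ^ (-(N : ℝ) / 2) * Real.exp (-(1 / 70)) := by
        rw [Real.mul_rpow (by positivity) (by positivity), Real.rpow_sq_neg_half N hr,
          heatLowerConst]
        ring
    _ ≤ (4 * Real.pi * τ) ^ (-(N : ℝ) / 2) * Real.exp (-‖y‖ ^ 2 / (4 * τ)) :=
        mul_le_mul hprefactor hexp (Real.exp_pos _).le (Real.rpow_nonneg (by positivity) _)
    _ = heatK N (y, τ) := by simp only [heatK, if_pos hτ]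

lemma mem_pQ_lag_iff {N : ℕ} {r t : ℝ} {x : EuclideanSpace ℝ (Fin N)} {w : PSpace N} :
    w ∈ pQ N (r / 8) (x, t - 35 / 128 * r ^ 2) ↔
      ‖x - w.1‖ < r / 8 ∧ 35 / 128 * r ^ 2 ≤ t - w.2 ∧ t - w.2 < 37 / 128 * r ^ 2 := by
  simp only [pQ, mem_prod, mem_ball, dist_comm w.1, dist_eq_norm, mem_Ioc]
  constructor <;> rintro ⟨hx, h₁, h₂⟩ <;> exact ⟨hx, by linarith, by linarith⟩

lemma pairwise_disjoint_pQ_dyadic (N : ℕ) (ρ : ℝ) (z : PSpace N) :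
    Pairwise (Disjoint on fun k : ℕ =>
      pQ N (ρ / 4 ^ k / 8) (z.1, z.2 - 35 / 128 * (ρ / 4 ^ k) ^ 2)) := by
  refine (pairwise_disjoint_on _).mpr fun k l hkl => disjoint_left.mpr fun w hk hl => ?_
  rw [mem_pQ_lag_iff] at hk hl
  have hshrink : (ρ / 4 ^ l) ^ 2 ≤ (ρ / 4 ^ k) ^ 2 / 16 := by
    rw [div_pow, div_pow, div_div, ← pow_mul, ← pow_mul]
    refine div_le_div_of_nonneg_left (sq_nonneg ρ) (by positivity) ?_
    calc (4 : ℝ) ^ (k * 2) * 16 = 4 ^ ((k + 1) * 2) := by ring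
      _ ≤ 4 ^ (l * 2) := pow_le_pow_right₀ (by norm_num) (by omega)
  nlinarith [sq_nonneg (ρ / 4 ^ k)]

theorem heat_potential_ge_dyadic_sum_general (N : ℕ) :
    ∃ C₂ > (0 : ℝ), ∀ R > (0 : ℝ), ∀ μ : Measure (PSpace N), IsFiniteMeasure μ →
      μ (pQt N R 0)ᶜ = 0 →
      ∀ z ∈ pQt N R 0, ∀ ρ > (0 : ℝ),
        ball z.1 ρ ⊆ ball (0 : EuclideanSpace ℝ (Fin N)) R →
        ENNReal.ofReal C₂ *
            ∑' k : ℕ, μ (pQ N (ρ / 4 ^ k / 8) (z.1, z.2 - 35 / 128 * (ρ / 4 ^ k) ^ 2)) /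
              ENNReal.ofReal ((ρ / 4 ^ k) ^ N)
          ≤ heatPot N μ z := by
  refine ⟨heatLowerConst N, heatLowerConst_pos N, fun R _ μ _ _ z _ ρ hρ _ => ?_⟩
  have hρk : ∀ k : ℕ, 0 < ρ / 4 ^ k := fun k => by positivity
  rw [← ENNReal.tsum_mul_left]
  calc _ = ∑' k : ℕ, ENNReal.ofReal (heatLowerConst N / (ρ / 4 ^ k) ^ N) *
          μ (pQ N (ρ / 4 ^ k / 8) (z.1, z.2 - 35 / 128 * (ρ / 4 ^ k) ^ 2)) := by
        congr 1 with k
        rw [ENNReal.ofReal_div_of_pos (pow_pos (hρk k) N)]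
        simp only [div_eq_mul_inv]
        ring
    _ ≤ heatPot N μ z := by
        refine tsum_mul_measure_le_lintegral (fun k => measurableSet_ball.prod measurableSet_Ioc)
          (pairwise_disjoint_pQ_dyadic N ρ z) fun k w hw => ?_
        obtain ⟨hx, hτ₁, hτ₂⟩ := mem_pQ_lag_iff.mp hw
        exact ENNReal.ofReal_le_ofReal
          (heatLowerConst_div_le_heatK N (hρk k) hτ₁ hτ₂.le hx.le)

/-- Lower bound of the heat potential by a dyadic sum:
`(ℍ * μ)(x,t) ≥ C₂(N) Σ_k μ(Q_{ρ_k/8}(x, t - (35/128)ρ_k²)) ρ_k^{-N}` with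
`ρ_k = 4^{-k} ρ`, for `(x,t) ∈ Q̃_R(0,0)` and `B_ρ(x) ⊆ B_R(0)`. -/
theorem heat_potential_ge_dyadic_sum (N : ℕ) (hN : 2 ≤ N) :
    ∃ C₂ > (0 : ℝ), ∀ R > (0 : ℝ), ∀ μ : Measure (PSpace N), IsFiniteMeasure μ →
      μ (pQt N R 0)ᶜ = 0 →
      ∀ z ∈ pQt N R 0, ∀ ρ > (0 : ℝ),
        ball z.1 ρ ⊆ ball (0 : EuclideanSpace ℝ (Fin N)) R →
        ENNReal.ofReal C₂ *
            ∑' k : ℕ, μ (pQ N (ρ / 4 ^ k / 8) (z.1, z.2 - 35 / 128 * (ρ / 4 ^ k) ^ 2)) /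
              ENNReal.ofReal ((ρ / 4 ^ k) ^ N)
          ≤ heatPot N μ z :=
  heat_potential_ge_dyadic_sum_general N
end
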